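/- arXiv:2604.00428 — 3 statements merged into one kernel-verified Lean document; each statement's English description precedes it below -/
import Mathlib

section
/- Let τ^i be a walk from x_i to v_i of length h (the active prefix terminal states), and σ^i a walk from v_i to g_i, for each agent i, such that the prefixes are pairwise conflict-free and the tails are pairwise conflict-free. If additionally the tails are synchronized to start exactly at time h, then the concatenated walks τ^i ⧺ σ^i are pairwise conflict-free walks from x_i to g_i. -/
/-- Concatenation of a length-`h` prefix with a tail starting at time `h`. -/
def concatWalk {V : Type*} (h : ℕ) (τ σ : ℕ → V) : ℕ → V :=
  fun t => if t ≤ h then τ t else σ (t - h)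

/-!
Up to time `h` the concatenation follows the prefixes and from time `h` on it follows the tails
shifted by `h`; the two descriptions agree at the junction because every prefix ends where its tail
starts. A condition on the joint state at one time (vertex conflicts) or at two consecutive times
(walk edges, swap conflicts) therefore holds along the concatenation as soon as it holds along the
prefixes and along the tails.
-/

namespace concatWalk

variable {V : Type*} {h : ℕ} {τ σ : ℕ → V}

theorem of_le {t : ℕ} (ht : t ≤ h) : concatWalk h τ σ t = τ t := if_pos ht

theorem add_of_pos {s : ℕ} (hs : 0 < s) : concatWalk h τ σ (h + s) = σ s := by
  simp [concatWalk, hs.ne']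

theorem add (hjoin : τ h = σ 0) (s : ℕ) : concatWalk h τ σ (h + s) = σ s := by
  rcases Nat.eq_zero_or_pos s with rfl | hs
  · exact (of_le le_rfl).trans hjoin
  · exact add_of_pos hs

variable {ι : Type*} {τ σ : ι → ℕ → V} {L : ℕ}

theorem forall_le_add_of_forall_le (S : (ι → V) → Prop)
    (hτ : ∀ t ≤ h, S (τ · t)) (hσ : ∀ t ≤ L, S (σ · t)) :
    ∀ t ≤ h + L, S (fun i => concatWalk h (τ i) (σ i) t) := by
  intro t ht
  rcases le_or_gt t h with hth | hth
  · simpa only [of_le hth] using hτ t hth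
  · obtain ⟨s, rfl⟩ := Nat.exists_eq_add_of_lt hth
    simpa only [add_assoc, add_of_pos (Nat.succ_pos s)] using hσ (s + 1) (by omega)

theorem forall_lt_add_of_forall_lt (hjoin : ∀ i, τ i h = σ i 0)
    (R : (ι → V) → (ι → V) → Prop)
    (hτ : ∀ t < h, R (τ · t) (τ · (t + 1))) (hσ : ∀ t < L, R (σ · t) (σ · (t + 1))) :
    ∀ t < h + L, R (fun i => concatWalk h (τ i) (σ i) t)
      (fun i => concatWalk h (τ i) (σ i) (t + 1)) := by
  intro t ht
  rcases lt_or_ge t h with hth | hth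
  · simpa only [of_le hth.le, of_le hth] using hτ t hth
  · obtain ⟨s, rfl⟩ := Nat.exists_eq_add_of_le hth
    simpa only [add_assoc, add (hjoin _)] using hσ s (by omega)

end concatWalk

/-- Concatenating pairwise conflict-free active prefixes (walks from `x_i` to
`v_i` of length `h`) with pairwise conflict-free synchronized tails (walks
from `v_i` to `g_i` of length `L`) yields pairwise conflict-free walks from
`x_i` to `g_i`. -/
theorem concat_conflict_free {V : Type*} (E : V → V → Prop)
    (N : ℕ) (h L : ℕ) (x v g : Fin N → V) (τ σ : Fin N → ℕ → V)
    (hτwalk : ∀ i, ∀ t < h, E (τ i t) (τ i (t + 1)))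
    (hσwalk : ∀ i, ∀ t < L, E (σ i t) (σ i (t + 1)))
    (hτ0 : ∀ i, τ i 0 = x i) (hτh : ∀ i, τ i h = v i)
    (hσ0 : ∀ i, σ i 0 = v i) (hσL : ∀ i, σ i L = g i)
    (hcfτ : ∀ i j : Fin N, i ≠ j →
      (∀ t ≤ h, τ i t ≠ τ j t) ∧
      (∀ t < h, ¬(τ i (t + 1) = τ j t ∧ τ i t = τ j (t + 1))))
    (hcfσ : ∀ i j : Fin N, i ≠ j →
      (∀ t ≤ L, σ i t ≠ σ j t) ∧
      (∀ t < L, ¬(σ i (t + 1) = σ j t ∧ σ i t = σ j (t + 1)))) :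
    (∀ i, concatWalk h (τ i) (σ i) 0 = x i ∧
        concatWalk h (τ i) (σ i) (h + L) = g i ∧
        ∀ t < h + L,
          E (concatWalk h (τ i) (σ i) t) (concatWalk h (τ i) (σ i) (t + 1))) ∧
    (∀ i j : Fin N, i ≠ j →
      (∀ t ≤ h + L, concatWalk h (τ i) (σ i) t ≠ concatWalk h (τ j) (σ j) t) ∧
      (∀ t < h + L,
        ¬(concatWalk h (τ i) (σ i) (t + 1) = concatWalk h (τ j) (σ j) t ∧
          concatWalk h (τ i) (σ i) t = concatWalk h (τ j) (σ j) (t + 1)))) := by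
  have hjoin : ∀ i, τ i h = σ i 0 := fun i => (hτh i).trans (hσ0 i).symm
  refine ⟨fun i => ⟨?_, ?_, ?_⟩, fun i j hij => ⟨?_, ?_⟩⟩
  · exact (concatWalk.of_le h.zero_le).trans (hτ0 i)
  · exact (concatWalk.add (hjoin i) L).trans (hσL i)
  · exact concatWalk.forall_lt_add_of_forall_lt hjoin (fun a b => E (a i) (b i))
      (hτwalk i) (hσwalk i)
  · exact concatWalk.forall_le_add_of_forall_le (fun a => a i ≠ a j)
      (hcfτ i j hij).1 (hcfσ i j hij).1
  · exact concatWalk.forall_lt_add_of_forall_lt hjoin (fun a b => ¬(b i = a j ∧ a i = b j))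
      (hcfτ i j hij).2 (hcfσ i j hij).2
end

section
/- In a finite reflexive directed graph where every goal vertex is reachable from every agent's position, and on which there exists at least one conflict-free joint solution, a closed-loop controller that at each step maintains a valid certificate (a conflict-free joint trajectory set from the current state to the goals) and executes its first step drives all agents to their goals within B_0 timesteps, where B_0 is the initial certificate's cost. -/
/-!
Along the closed loop the certificate budget `B t` drops by at least one at every step at which
some agent is away from its goal, and once every agent is at its goal the certificate keeps it
there. A zero budget means the certificate starts at the goals, so, starting from `B 0`, the
budget runs out — and the agents are at their goals — after at most `B 0` steps.
-/

open Finset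

theorem holds_at_initial_budget_of_descent {P : ℕ → Prop} {B : ℕ → ℕ}
    (hzero : ∀ t, B t = 0 → P t) (hstep : ∀ t, P t → P (t + 1))
    (hdec : ∀ t, ¬P t → B (t + 1) ≤ B t - 1) : P (B 0) := by
  have key : ∀ t, P t ∨ B t + t ≤ B 0 := by
    intro t
    induction t with
    | zero => simp
    | succ t ih =>
      by_cases ht : P t
      · exact .inl (hstep t ht)
      · have hpos : B t ≠ 0 := mt (hzero t) ht
        have hle := ih.resolve_left ht
        have hdrop := hdec t ht
        right
        omega
  rcases key (B 0) with h | h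
  · exact h
  · exact hzero _ (by omega)

theorem start_eq_of_sum_range_ite_eq_zero {V : Type*} [DecidableEq V] {w : ℕ → V} {a : V}
    {M : ℕ} (hend : w M = a) (hcost : ∑ s ∈ range M, (if w s = a then 0 else 1) = 0) :
    w 0 = a := by
  rcases M.eq_zero_or_pos with rfl | hM
  · exact hend
  · simpa using sum_eq_zero_iff.mp hcost 0 (mem_range.mpr hM)

theorem one_le_sum_ite_of_not_forall_eq {ι V : Type*} [Fintype ι] [DecidableEq V] {y g : ι → V}
    (h : ¬∀ i, y i = g i) : 1 ≤ ∑ i, (if y i = g i then 0 else 1) := by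
  obtain ⟨i, hi⟩ := not_forall.mp h
  exact sum_pos' (fun _ _ => Nat.zero_le _) ⟨i, mem_univ i, by simp [hi]⟩

theorem certificate_controller_complete_general {V : Type*} [DecidableEq V]
    (N : ℕ) (g : Fin N → V)
    (x : ℕ → Fin N → V)
    -- the certificates maintained by the controller
    (M : ℕ → ℕ) (cert : ℕ → Fin N → ℕ → V) (B : ℕ → ℕ)
    (hstart : ∀ t i, cert t i 0 = x t i)
    (hgoal : ∀ t i, cert t i (M t) = g i)
    (hstay : ∀ t i s, cert t i s = g i → cert t i (s + 1) = g i)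
    (hcost : ∀ t, B t = ∑ i, ∑ s ∈ Finset.range (M t),
        (if cert t i s = g i then 0 else 1))
    -- the controller executes the first step of the certificate
    (hexec : ∀ t i, x (t + 1) i = cert t i 1)
    -- valid certificate updates
    (hupdate : ∀ t, B (t + 1) ≤ B t - ∑ i, (if x t i = g i then 0 else 1)) :
    ∀ i, x (B 0) i = g i := by
  refine holds_at_initial_budget_of_descent (P := fun t => ∀ i, x t i = g i) ?_ ?_ ?_
  · intro t hB i
    rw [hcost t, sum_eq_zero_iff] at hB
    rw [← hstart t i]
    exact start_eq_of_sum_range_ite_eq_zero (hgoal t i) (hB i (mem_univ i))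
  · intro t hat i
    rw [hexec t i]
    exact hstay t i 0 ((hstart t i).trans (hat i))
  · intro t haway
    have hpos := one_le_sum_ite_of_not_forall_eq haway
    have hdrop := hupdate t
    omega

/-- Completeness of certificate-driven closed-loop control: in a finite
reflexive directed graph where every goal is reachable and a conflict-free
joint solution exists, a closed-loop controller that maintains a valid
certificate (a pairwise conflict-free joint trajectory set from the current
state to the goals, with budget recursion
`B (t+1) ≤ B t − ∑_i p_i(x_t(i))`) and executes its first step drives all
agents to their goals within `B 0` timesteps. -/
theorem certificate_controller_complete {V : Type*} [Fintype V] [DecidableEq V]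
    (E : V → V → Prop) (hrefl : ∀ u, E u u)
    (N : ℕ) (g : Fin N → V)
    (x : ℕ → Fin N → V)
    (hreach : ∀ (u : V) (i : Fin N), ∃ (L : ℕ) (σ : ℕ → V),
        (∀ t < L, E (σ t) (σ (t + 1))) ∧ σ 0 = u ∧ σ L = g i)
    -- a conflict-free joint solution from the initial state exists
    (hsol : ∃ (M : ℕ) (sol : Fin N → ℕ → V),
        (∀ i, sol i 0 = x 0 i) ∧ (∀ i, sol i M = g i) ∧
        (∀ i, ∀ t < M, E (sol i t) (sol i (t + 1))) ∧
        (∀ i j : Fin N, i ≠ j →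
          (∀ t ≤ M, sol i t ≠ sol j t) ∧
          (∀ t < M, ¬(sol i (t + 1) = sol j t ∧ sol i t = sol j (t + 1)))))
    -- the certificates maintained by the controller
    (M : ℕ → ℕ) (cert : ℕ → Fin N → ℕ → V) (B : ℕ → ℕ)
    (hstart : ∀ t i, cert t i 0 = x t i)
    (hgoal : ∀ t i, cert t i (M t) = g i)
    (hcertwalk : ∀ t i, ∀ s < M t, E (cert t i s) (cert t i (s + 1)))
    (hstay : ∀ t i s, cert t i s = g i → cert t i (s + 1) = g i)
    (hcf : ∀ t, ∀ i j : Fin N, i ≠ j →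
      (∀ s ≤ M t, cert t i s ≠ cert t j s) ∧
      (∀ s < M t,
        ¬(cert t i (s + 1) = cert t j s ∧ cert t i s = cert t j (s + 1))))
    (hcost : ∀ t, B t = ∑ i, ∑ s ∈ Finset.range (M t),
        (if cert t i s = g i then 0 else 1))
    -- the controller executes the first step of the certificate
    (hexec : ∀ t i, x (t + 1) i = cert t i 1)
    -- valid certificate updates
    (hupdate : ∀ t, B (t + 1) ≤ B t - ∑ i, (if x t i = g i then 0 else 1)) :
    ∀ i, x (B 0) i = g i :=
  certificate_controller_complete_general N g x M cert B hstart hgoal hstay hcost hexec hupdate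
end

section
/- Suppose the joint cost decomposes over a partition A = A_1 ⊔ … ⊔ A_K (C(τ^A) = ∑_k C(τ^{A_k})) and any conflict involves only agents whose trajectories both visit some common vertex. If agents in different groups have disjoint reachable regions and all considered trajectories stay within each agent's reachable region, then a joint trajectory set is conflict-free iff each group's trajectory set is conflict-free, and it is cost-minimal among such region-respecting conflict-free sets iff each group's trajectory set is cost-minimal for its group. -/
/-!
Two agents whose trajectories stay in disjoint regions can never meet, so conflict-freedom of a
region-respecting plan reduces to conflict-freedom inside each group. The feasible plans are thus
exactly the plans whose restriction to every group is feasible for that group, and these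
restrictions can be chosen independently of one another. Since the cost is a sum over groups, a
plan is optimal iff each group is optimal: splicing a better plan for one group into an optimal
joint plan would lower the joint cost.
-/

open Finset

section Fiberwise

variable {ι κ α : Type*} (f : ι → κ)

theorem forall_ne_iff_forall_fiber_ne (P : ι → ι → Prop) (hP : ∀ i j, f i ≠ f j → P i j) :
    (∀ i j, i ≠ j → P i j) ↔ ∀ k i j, f i = k → f j = k → i ≠ j → P i j := by
  refine ⟨fun h k i j _ _ => h i j, fun h i j hij => ?_⟩
  by_cases hf : f i = f j
  · exact h (f j) i j hf rfl hij
  · exact hP i j hf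

variable [Fintype ι] [DecidableEq κ] {M : Type*} [AddCommMonoid M] [PartialOrder M]
  [IsOrderedCancelAddMonoid M] (c : ι → α → M)

theorem sum_le_sum_of_fiber_sum_le {τ σ : ι → α}
    (h : ∀ k, ∑ i ∈ univ.filter (f · = k), c i (τ i) ≤ ∑ i ∈ univ.filter (f · = k), c i (σ i)) :
    ∑ i, c i (τ i) ≤ ∑ i, c i (σ i) := by
  have hf : ∀ i ∈ (univ : Finset ι), f i ∈ univ.image f := fun i _ => mem_image_of_mem f (mem_univ i)
  rw [← sum_fiberwise_of_maps_to hf, ← sum_fiberwise_of_maps_to hf]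
  exact sum_le_sum fun k _ => h k

theorem fiber_sum_le_of_sum_le_splice {τ σ : ι → α} (k : κ)
    (h : ∑ i, c i (τ i) ≤ ∑ i, c i (if f i = k then σ i else τ i)) :
    ∑ i ∈ univ.filter (f · = k), c i (τ i) ≤ ∑ i ∈ univ.filter (f · = k), c i (σ i) := by
  have hsplice : ∑ i, c i (if f i = k then σ i else τ i)
      = ∑ i ∈ univ.filter (f · = k), c i (σ i) + ∑ i ∈ univ.filter (¬f · = k), c i (τ i) :=
    (sum_congr rfl fun i _ => apply_ite (c i) _ _ _).trans (sum_ite _ _)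
  rw [hsplice, ← sum_filter_add_sum_filter_not univ (f · = k)] at h
  exact le_of_add_le_add_right h

theorem forall_sum_le_iff_forall_fiber_sum_le (P : κ → (ι → α) → Prop)
    (hP : ∀ k σ σ', (∀ i, f i = k → σ i = σ' i) → P k σ → P k σ')
    {τ : ι → α} (hτ : ∀ k, P k τ) :
    (∀ σ, (∀ k, P k σ) → ∑ i, c i (τ i) ≤ ∑ i, c i (σ i)) ↔
      ∀ k σ, P k σ →
        ∑ i ∈ univ.filter (f · = k), c i (τ i) ≤ ∑ i ∈ univ.filter (f · = k), c i (σ i) := by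
  refine ⟨fun hopt k σ hσ => fiber_sum_le_of_sum_le_splice f c k (hopt _ fun k' => ?_),
    fun h σ hσ => sum_le_sum_of_fiber_sum_le f c fun k => h k σ (hσ k)⟩
  by_cases hk : k' = k
  · subst hk
    exact hP k' σ _ (fun i hi => (if_pos hi).symm) hσ
  · exact hP k' τ _ (fun i hi => (if_neg (hi ▸ hk)).symm) (hτ k')

end Fiberwise

section Conflicts

variable {V : Type*}

/-- No vertex conflict and no swap (edge) conflict up to time `T`. -/
def NoConflict (T : ℕ) (a b : ℕ → V) : Prop :=
  (∀ t ≤ T, a t ≠ b t) ∧ (∀ t < T, ¬(a (t + 1) = b t ∧ a t = b (t + 1)))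

theorem noConflict_of_disjoint {T : ℕ} {a b : ℕ → V} {A B : Set V} (hAB : Disjoint A B)
    (ha : ∀ t ≤ T, a t ∈ A) (hb : ∀ t ≤ T, b t ∈ B) : NoConflict T a b :=
  ⟨fun t ht => hAB.ne_of_mem (ha t ht) (hb t ht),
    fun t ht h => hAB.ne_of_mem (ha (t + 1) ht) (hb t ht.le) h.1⟩

variable {ι κ : Type*} (f : ι → κ) (R : ι → Set V) (T : ℕ)

def GroupFeasible (k : κ) (σ : ι → ℕ → V) : Prop :=
  (∀ i, f i = k → ∀ t ≤ T, σ i t ∈ R i) ∧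
    ∀ i j, f i = k → f j = k → i ≠ j → NoConflict T (σ i) (σ j)

variable {f R}

theorem noConflict_iff_forall_group (hdisj : ∀ i j, f i ≠ f j → R i ∩ R j = ∅)
    {σ : ι → ℕ → V} (hσR : ∀ i, ∀ t ≤ T, σ i t ∈ R i) :
    (∀ i j, i ≠ j → NoConflict T (σ i) (σ j)) ↔
      ∀ k i j, f i = k → f j = k → i ≠ j → NoConflict T (σ i) (σ j) :=
  forall_ne_iff_forall_fiber_ne f _ fun i j hij =>
    noConflict_of_disjoint (Set.disjoint_iff_inter_eq_empty.2 (hdisj i j hij)) (hσR i) (hσR j)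

theorem feasible_iff_forall_groupFeasible (hdisj : ∀ i j, f i ≠ f j → R i ∩ R j = ∅)
    (σ : ι → ℕ → V) :
    ((∀ i, ∀ t ≤ T, σ i t ∈ R i) ∧ ∀ i j, i ≠ j → NoConflict T (σ i) (σ j)) ↔
      ∀ k, GroupFeasible f R T k σ := by
  refine ⟨fun ⟨hσR, hσ⟩ k => ⟨fun i _ => hσR i, (noConflict_iff_forall_group T hdisj hσR).1 hσ k⟩,
    fun h => ?_⟩
  have hσR : ∀ i, ∀ t ≤ T, σ i t ∈ R i := fun i => (h (f i)).1 i rfl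
  exact ⟨hσR, (noConflict_iff_forall_group T hdisj hσR).2 fun k => (h k).2⟩

theorem GroupFeasible.congr {k : κ} {σ σ' : ι → ℕ → V} (hσσ' : ∀ i, f i = k → σ i = σ' i)
    (hσ : GroupFeasible f R T k σ) : GroupFeasible f R T k σ' := by
  refine ⟨fun i hi => hσσ' i hi ▸ hσ.1 i hi, fun i j hi hj hij => ?_⟩
  rw [← hσσ' i hi, ← hσσ' j hj]
  exact hσ.2 i j hi hj hij

end Conflicts

/-- Exact decomposition of conflict-free planning across a budget-limited
factorization. Agents are partitioned into groups by a labeling `f`; agents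
in different groups have disjoint reachable regions, and all considered
trajectories stay within each agent's region. The joint cost is the sum of
per-agent costs (hence decomposes over groups). Then:
(i) a region-respecting joint trajectory set is conflict-free iff each group's
trajectory set is conflict-free; and
(ii) it is cost-minimal among region-respecting conflict-free joint sets iff
each group's trajectory set is cost-minimal for its group. -/
theorem factorized_planning_decomposition {V ι κ : Type*}
    [Fintype ι] [DecidableEq κ] (f : ι → κ)
    (R : ι → Set V)
    (hdisj : ∀ i j : ι, f i ≠ f j → R i ∩ R j = ∅)
    (T : ℕ) (c : ι → (ℕ → V) → ℕ)
    (τ : ι → ℕ → V)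
    (hτR : ∀ i : ι, ∀ t ≤ T, τ i t ∈ R i) :
    -- (i) conflict-freedom decomposes across groups
    ((∀ i j : ι, i ≠ j →
        (∀ t ≤ T, τ i t ≠ τ j t) ∧
        (∀ t < T, ¬(τ i (t + 1) = τ j t ∧ τ i t = τ j (t + 1)))) ↔
      (∀ k : κ, ∀ i j : ι, f i = k → f j = k → i ≠ j →
        (∀ t ≤ T, τ i t ≠ τ j t) ∧
        (∀ t < T, ¬(τ i (t + 1) = τ j t ∧ τ i t = τ j (t + 1)))))
    ∧
    -- (ii) cost-minimality decomposes across groups (assuming τ is a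
    -- region-respecting conflict-free candidate)
    ((∀ i j : ι, i ≠ j →
        (∀ t ≤ T, τ i t ≠ τ j t) ∧
        (∀ t < T, ¬(τ i (t + 1) = τ j t ∧ τ i t = τ j (t + 1)))) →
      ((∀ σ : ι → ℕ → V,
          (∀ i : ι, ∀ t ≤ T, σ i t ∈ R i) →
          (∀ i j : ι, i ≠ j →
            (∀ t ≤ T, σ i t ≠ σ j t) ∧
            (∀ t < T, ¬(σ i (t + 1) = σ j t ∧ σ i t = σ j (t + 1)))) →
          ∑ i, c i (τ i) ≤ ∑ i, c i (σ i)) ↔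
        (∀ k : κ, ∀ σ : ι → ℕ → V,
          (∀ i : ι, f i = k → ∀ t ≤ T, σ i t ∈ R i) →
          (∀ i j : ι, f i = k → f j = k → i ≠ j →
            (∀ t ≤ T, σ i t ≠ σ j t) ∧
            (∀ t < T, ¬(σ i (t + 1) = σ j t ∧ σ i t = σ j (t + 1)))) →
          ∑ i ∈ Finset.univ.filter (fun i => f i = k), c i (τ i)
            ≤ ∑ i ∈ Finset.univ.filter (fun i => f i = k), c i (σ i)))) := by
  refine ⟨noConflict_iff_forall_group T hdisj hτR, fun hτ => ?_⟩
  have hopt_iff := forall_sum_le_iff_forall_fiber_sum_le f c (GroupFeasible f R T)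
    (fun _ _ _ => GroupFeasible.congr T) ((feasible_iff_forall_groupFeasible T hdisj τ).1 ⟨hτR, hτ⟩)
  simp only [← feasible_iff_forall_groupFeasible T hdisj] at hopt_iff
  simp only [GroupFeasible, and_imp] at hopt_iff
  exact hopt_iff
end
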